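/- If A|H logically implies B|K in the sense of Goodman–Nguyen (A|H ⊑ B|K), then ⟦(A|H)∧(B|K)⟧(ω) = ⟦A|H⟧(ω) for every ω ∈ Ω; in particular, the prevision z of the conjunction equals P(A|H). (Here P(H) > 0 and P(K) > 0.) -/

import Mathlib

/-!
Goodman–Nguyen implication gives `⟦A|H⟧ ≤ ⟦B|K⟧` on `H ∪ K`: on `A ∩ H` both equal `1`, on
`H \ A` the left side is `0`, and on `K \ H` the point lies in `B`, so the right side is
`1 ≥ P(A|H)`. Hence the integrand defining `z` is `⟦A|H⟧·1_{H∪K}`, whose expectation is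
`P(A|H)·P(H ∪ K)` because `H ⊆ H ∪ K`; so `z = P(A|H)`, which is also the value of `⟦A|H⟧`
off `H ∪ K`.
-/

open MeasureTheory Set
open scoped Classical

noncomputable section

variable {Ω : Type*} [MeasurableSpace Ω]

def ind (A : Set Ω) : Ω → ℝ := A.indicator 1

/-- Conditional probability `P(A|H) = P(A ∩ H)/P(H)`. -/
def condProb (P : Measure Ω) (A H : Set Ω) : ℝ :=
  (P (A ∩ H)).toReal / (P H).toReal

/-- The (indicator of the) conditional event `A|H`,
`⟦A|H⟧ = 1_{A∩H} + P(A|H)·1_{Hᶜ}`. -/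
def condEvent (P : Measure Ω) (A H : Set Ω) : Ω → ℝ :=
  fun ω => ind (A ∩ H) ω + condProb P A H * ind Hᶜ ω

/-- The prevision `z` of the conjunction `(A|H) ∧ (B|K)`:
`z = E[min(⟦A|H⟧, ⟦B|K⟧)·1_{H∪K}]/P(H∪K)`. -/
def conjPrev (P : Measure Ω) (A H B K : Set Ω) : ℝ :=
  (∫ ω, min (condEvent P A H ω) (condEvent P B K ω) * ind (H ∪ K) ω ∂P) /
    (P (H ∪ K)).toReal

/-- The conjunction `⟦(A|H) ∧ (B|K)⟧ = min(⟦A|H⟧, ⟦B|K⟧)·1_{H∪K} + z·1_{(H∪K)ᶜ}`. -/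
def conjCE (P : Measure Ω) (A H B K : Set Ω) : Ω → ℝ :=
  fun ω => min (condEvent P A H ω) (condEvent P B K ω) * ind (H ∪ K) ω
    + conjPrev P A H B K * ind (H ∪ K)ᶜ ω

/-- The iterated conditional `⟦(B|K)|(A|H)⟧ = ⟦(A|H)∧(B|K)⟧ + μ·(1 − ⟦A|H⟧)`,
with `μ = z / P(A|H)`. -/
def iterCond (P : Measure Ω) (A H B K : Set Ω) : Ω → ℝ :=
  fun ω => conjCE P A H B K ω +
    (conjPrev P A H B K / condProb P A H) * (1 - condEvent P A H ω)

/-- Goodman–Nguyen logical implication between conditional events: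
`A|H ⊑ B|K` iff `A∩H ⊆ B∩K` and `Bᶜ∩K ⊆ Aᶜ∩H`. -/
def GNle (A H B K : Set Ω) : Prop := A ∩ H ⊆ B ∩ K ∧ Bᶜ ∩ K ⊆ Aᶜ ∩ H

lemma ind_of_mem {α : Type*} {A : Set α} {a : α} (h : a ∈ A) : ind A a = 1 :=
  indicator_of_mem h _

lemma ind_of_notMem {α : Type*} {A : Set α} {a : α} (h : a ∉ A) : ind A a = 0 :=
  indicator_of_notMem h _

lemma ind_nonneg {α : Type*} (A : Set α) (a : α) : 0 ≤ ind A a :=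
  indicator_nonneg (fun _ _ => zero_le_one) a

lemma ind_add_ind_compl {α : Type*} (A : Set α) (a : α) : ind A a + ind Aᶜ a = 1 :=
  indicator_self_add_compl_apply A 1 a

lemma integral_ind (P : Measure Ω) {A : Set Ω} (hA : MeasurableSet A) :
    ∫ ω, ind A ω ∂P = (P A).toReal :=
  integral_indicator_one hA

lemma integrable_ind (P : Measure Ω) [IsFiniteMeasure P] {A : Set Ω} (hA : MeasurableSet A) :
    Integrable (ind A) P :=
  (integrable_const (1 : ℝ)).indicator hA

section CondEvent

variable (P : Measure Ω) (A H : Set Ω)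

lemma condProb_nonneg : 0 ≤ condProb P A H :=
  div_nonneg ENNReal.toReal_nonneg ENNReal.toReal_nonneg

lemma condProb_le_one [IsFiniteMeasure P] : condProb P A H ≤ 1 :=
  div_le_one_of_le₀ (measureReal_mono inter_subset_right) ENNReal.toReal_nonneg

lemma condProb_mul_measure [IsFiniteMeasure P] :
    condProb P A H * (P H).toReal = (P (A ∩ H)).toReal := by
  rcases eq_or_ne (P H).toReal 0 with hH | hH
  · have : (P (A ∩ H)).toReal = 0 :=
      le_antisymm (hH ▸ measureReal_mono inter_subset_right) ENNReal.toReal_nonneg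
    rw [hH, this, mul_zero]
  · exact div_mul_cancel₀ _ hH

lemma condEvent_nonneg (ω : Ω) : 0 ≤ condEvent P A H ω :=
  add_nonneg (ind_nonneg _ _) (mul_nonneg (condProb_nonneg _ _ _) (ind_nonneg _ _))

variable {P A H}

lemma condEvent_of_mem {ω : Ω} (hω : ω ∈ H) : condEvent P A H ω = ind A ω := by
  by_cases hA : ω ∈ A
  · simp [condEvent, ind_of_mem hA, ind_of_mem (mem_inter hA hω),
      ind_of_notMem (notMem_compl_iff.mpr hω)]
  · simp [condEvent, ind_of_notMem hA, ind_of_notMem (fun h : ω ∈ A ∩ H => hA h.1),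
      ind_of_notMem (notMem_compl_iff.mpr hω)]

lemma condEvent_of_notMem {ω : Ω} (hω : ω ∉ H) : condEvent P A H ω = condProb P A H := by
  simp [condEvent, ind_of_notMem (fun h : ω ∈ A ∩ H => hω h.2), ind_of_mem (mem_compl hω)]

lemma condEvent_mul_ind_of_subset {S : Set Ω} (hHS : H ⊆ S) (ω : Ω) :
    condEvent P A H ω * ind S ω = ind (A ∩ H) ω + condProb P A H * ind (S \ H) ω := by
  by_cases hH : ω ∈ H
  · simp [condEvent, ind_of_mem (hHS hH), ind_of_notMem (notMem_compl_iff.mpr hH),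
      ind_of_notMem (fun h : ω ∈ S \ H => h.2 hH)]
  by_cases hS : ω ∈ S
  · simp [condEvent_of_notMem hH, ind_of_mem hS, ind_of_mem (mem_sdiff_of_mem hS hH),
      ind_of_notMem (fun h : ω ∈ A ∩ H => hH h.2)]
  · simp [ind_of_notMem hS, ind_of_notMem (fun h : ω ∈ S \ H => hS h.1),
      ind_of_notMem (fun h : ω ∈ A ∩ H => hS (hHS h.2))]

lemma condProb_mul_ind_compl_of_subset {S : Set Ω} (hHS : H ⊆ S) (ω : Ω) :
    condProb P A H * ind Sᶜ ω = condEvent P A H ω * ind Sᶜ ω := by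
  by_cases hS : ω ∈ S
  · simp [ind_of_notMem (notMem_compl_iff.mpr hS)]
  · rw [condEvent_of_notMem (fun h => hS (hHS h))]

lemma integral_condEvent_mul_ind [IsFiniteMeasure P] {S : Set Ω} (hA : MeasurableSet A)
    (hH : MeasurableSet H) (hS : MeasurableSet S) (hHS : H ⊆ S) :
    ∫ ω, condEvent P A H ω * ind S ω ∂P = condProb P A H * (P S).toReal := by
  have hAH := hA.inter hH
  have hSH := hS.diff hH
  calc ∫ ω, condEvent P A H ω * ind S ω ∂P
      = ∫ ω, ind (A ∩ H) ω + condProb P A H * ind (S \ H) ω ∂P :=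
        integral_congr_ae (.of_forall (condEvent_mul_ind_of_subset hHS))
    _ = (P (A ∩ H)).toReal + condProb P A H * (P (S \ H)).toReal := by
        rw [integral_add (integrable_ind P hAH) ((integrable_ind P hSH).const_mul _),
          integral_const_mul, integral_ind P hAH, integral_ind P hSH]
    _ = condProb P A H * ((P H).toReal + (P (S \ H)).toReal) := by
        rw [mul_add, condProb_mul_measure]
    _ = condProb P A H * (P S).toReal := by
        rw [← measureReal_def, ← measureReal_def, ← measureReal_def,
          measureReal_add_sdiff hH, union_eq_self_of_subset_left hHS]

end CondEvent

section GNle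

variable (P : Measure Ω) {A H B K : Set Ω}

lemma condEvent_le_of_GNle [IsFiniteMeasure P] (hGN : GNle A H B K) {ω : Ω} (hω : ω ∈ H ∪ K) :
    condEvent P A H ω ≤ condEvent P B K ω := by
  by_cases hωH : ω ∈ H
  · by_cases hωA : ω ∈ A
    · have hωBK : ω ∈ B ∩ K := hGN.1 ⟨hωA, hωH⟩
      rw [condEvent_of_mem hωH, condEvent_of_mem hωBK.2, ind_of_mem hωA, ind_of_mem hωBK.1]
    · rw [condEvent_of_mem hωH, ind_of_notMem hωA]
      exact condEvent_nonneg P B K ω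
  · have hωK : ω ∈ K := hω.resolve_left hωH
    have hωB : ω ∈ B := by_contra fun hωB => hωH (hGN.2 ⟨hωB, hωK⟩).2
    rw [condEvent_of_notMem hωH, condEvent_of_mem hωK, ind_of_mem hωB]
    exact condProb_le_one P A H

lemma min_condEvent_mul_ind_of_GNle [IsFiniteMeasure P] (hGN : GNle A H B K) (ω : Ω) :
    min (condEvent P A H ω) (condEvent P B K ω) * ind (H ∪ K) ω
      = condEvent P A H ω * ind (H ∪ K) ω := by
  by_cases hω : ω ∈ H ∪ K
  · rw [min_eq_left (condEvent_le_of_GNle P hGN hω)]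
  · simp [ind_of_notMem hω]

lemma conjPrev_of_GNle [IsFiniteMeasure P] (hA : MeasurableSet A) (hH : MeasurableSet H)
    (hK : MeasurableSet K) (hGN : GNle A H B K) :
    conjPrev P A H B K = condProb P A H := by
  rw [conjPrev, integral_congr_ae (.of_forall (min_condEvent_mul_ind_of_GNle P hGN)),
    integral_condEvent_mul_ind hA hH (hH.union hK) subset_union_left]
  rcases eq_or_ne (P (H ∪ K)).toReal 0 with hHK | hHK
  -- both sides are then `0`, by the convention `x / 0 = 0`
  · have hH0 : (P H).toReal = 0 :=
      le_antisymm (hHK ▸ measureReal_mono subset_union_left) ENNReal.toReal_nonneg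
    simp [hHK, condProb, hH0]
  · exact mul_div_cancel_right₀ _ hHK

end GNle

theorem conj_of_GNle_general (P : Measure Ω) [IsProbabilityMeasure P]
    (A H B K : Set Ω)
    (hAm : MeasurableSet A) (hHm : MeasurableSet H)
    (hKm : MeasurableSet K)
    (hGN : GNle A H B K) :
    (∀ ω, conjCE P A H B K ω = condEvent P A H ω) ∧
      conjPrev P A H B K = condProb P A H := by
  have hz := conjPrev_of_GNle P hAm hHm hKm hGN
  refine ⟨fun ω => ?_, hz⟩
  rw [conjCE, hz, min_condEvent_mul_ind_of_GNle P hGN,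
    condProb_mul_ind_compl_of_subset subset_union_left, ← mul_add, ind_add_ind_compl, mul_one]

/-- If `A|H ⊑ B|K` (Goodman–Nguyen), then `⟦(A|H)∧(B|K)⟧ = ⟦A|H⟧` pointwise;
in particular the prevision of the conjunction equals `P(A|H)`. -/
theorem conj_of_GNle (P : Measure Ω) [IsProbabilityMeasure P]
    (A H B K : Set Ω)
    (hAm : MeasurableSet A) (hHm : MeasurableSet H)
    (hBm : MeasurableSet B) (hKm : MeasurableSet K)
    (hH : 0 < P H) (hK : 0 < P K)
    (hGN : GNle A H B K) :
    (∀ ω, conjCE P A H B K ω = condEvent P A H ω) ∧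
      conjPrev P A H B K = condProb P A H :=
  conj_of_GNle_general P A H B K hAm hHm hKm hGN

end
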